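/- (Validity of ⊸-introduction) For every finite multiset Γ of IMLL formulas and all IMLL formulas φ, ψ: if Γ ⨾ φ ⊩ ψ, then Γ ⊩ φ ⊸ ψ. -/
import Mathlib


/-- Formulas of intuitionistic multiplicative linear logic over a
countably infinite set of atoms (here: `ℕ`). -/
inductive MForm : Type where
  | atom : ℕ → MForm
  | tensor : MForm → MForm → MForm
  | unit : MForm
  | limp : MForm → MForm → MForm
deriving DecidableEq

/-- An atomic rule `(P₁ ▷ p₁, …, Pₙ ▷ pₙ) ⇒ p`: a (possibly empty) finite
set of atomic sequents together with a conclusion atom. -/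
structure MRule : Type where
  prems : Finset (Multiset ℕ × ℕ)
  concl : ℕ

/-- A base is a set of atomic rules. -/
abbrev MBase := Set MRule

/-- Derivability in a base `B`: `P ⊢_B p`. -/
inductive MDer (B : MBase) : Multiset ℕ → ℕ → Prop where
  | ref (p : ℕ) : MDer B {p} p
  | app {r : MRule} (hr : r ∈ B) (S : Multiset ℕ × ℕ → Multiset ℕ)
      (h : ∀ pr ∈ r.prems, MDer B (S pr + pr.1) pr.2) :
      MDer B (r.prems.sum S) r.concl

/-- The resource-indexed support relation `⊩_B^P φ`. -/
def MSupp : MForm → MBase → Multiset ℕ → Prop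
  | .atom p, B, P => MDer B P p
  | .tensor φ ψ, B, P => ∀ X : MBase, B ⊆ X → ∀ U : Multiset ℕ, ∀ p : ℕ,
      (∀ Y : MBase, X ⊆ Y → ∀ V : Multiset ℕ,
        (∃ V₁ V₂ : Multiset ℕ, V = V₁ + V₂ ∧ MSupp φ Y V₁ ∧ MSupp ψ Y V₂) →
        MDer Y (U + V) p) →
      MDer X (P + U) p
  | .unit, B, P => ∀ X : MBase, B ⊆ X → ∀ U : Multiset ℕ, ∀ p : ℕ,
      MDer X U p → MDer X (P + U) p
  | .limp φ ψ, B, P => ∀ X : MBase, B ⊆ X → ∀ U : Multiset ℕ,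
      MSupp φ X U → MSupp ψ X (P + U)

/-- Support of a multiset of formulas: `⊩_B^P Γ`, obtained by splitting
the resources `P` among the members of `Γ`. -/
inductive MSuppCtx (B : MBase) : Multiset ℕ → Multiset MForm → Prop where
  | nil : MSuppCtx B 0 0
  | cons {P Q : Multiset ℕ} {φ : MForm} {Γ : Multiset MForm} :
      MSupp φ B P → MSuppCtx B Q Γ → MSuppCtx B (P + Q) (φ ::ₘ Γ)

/-- Support of a sequent: `Γ ⊩_B^P φ` (clause (Inf)). -/
def MSuppInf (Γ : Multiset MForm) (B : MBase) (P : Multiset ℕ) (φ : MForm) : Prop :=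
  ∀ X : MBase, B ⊆ X → ∀ U : Multiset ℕ, MSuppCtx X U Γ → MSupp φ X (P + U)

/-- Validity: `Γ ⊩ φ` iff `Γ ⊩_B^∅ φ` for every base `B`. -/
def MValid (Γ : Multiset MForm) (φ : MForm) : Prop :=
  ∀ B : MBase, MSuppInf Γ B 0 φ

/-- The natural deduction system NIMLL: `Γ ⊢ φ`. -/
inductive NIMLL : Multiset MForm → MForm → Prop where
  | ax (φ : MForm) : NIMLL {φ} φ
  | limpI {Γ : Multiset MForm} {φ ψ : MForm} :
      NIMLL (φ ::ₘ Γ) ψ → NIMLL Γ (.limp φ ψ)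
  | limpE {Γ Δ : Multiset MForm} {φ ψ : MForm} :
      NIMLL Γ (.limp φ ψ) → NIMLL Δ φ → NIMLL (Γ + Δ) ψ
  | unitI : NIMLL 0 .unit
  | unitE {Γ Δ : Multiset MForm} {φ : MForm} :
      NIMLL Γ φ → NIMLL Δ .unit → NIMLL (Γ + Δ) φ
  | tensorI {Γ Δ : Multiset MForm} {φ ψ : MForm} :
      NIMLL Γ φ → NIMLL Δ ψ → NIMLL (Γ + Δ) (.tensor φ ψ)
  | tensorE {Γ Δ : Multiset MForm} {φ ψ χ : MForm} :
      NIMLL Γ (.tensor φ ψ) → NIMLL (φ ::ₘ ψ ::ₘ Δ) χ → NIMLL (Γ + Δ) χ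

lemma MDer.mono {B X : MBase} (hBX : B ⊆ X) {P : Multiset ℕ} {p : ℕ}
    (h : MDer B P p) : MDer X P p := by
  induction h with
  | ref p => exact .ref p
  | app hr S h ih => exact .app (hBX hr) S ih

lemma MSupp.mono {φ : MForm} {B X : MBase} (hBX : B ⊆ X) {P : Multiset ℕ}
    (h : MSupp φ B P) : MSupp φ X P := by
  cases φ with
  | atom p => exact MDer.mono hBX h
  | tensor φ ψ => exact fun Y hXY => h Y (hBX.trans hXY)
  | unit => exact fun Y hXY => h Y (hBX.trans hXY)
  | limp φ ψ => exact fun Y hXY => h Y (hBX.trans hXY)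

lemma MSuppCtx.mono {B X : MBase} (hBX : B ⊆ X) {P : Multiset ℕ}
    {Γ : Multiset MForm} (h : MSuppCtx B P Γ) : MSuppCtx X P Γ := by
  induction h with
  | nil => exact .nil
  | cons hφ _ ih => exact .cons (hφ.mono hBX) ih

/-- (Validity of ⊸-introduction) If `Γ ⨾ φ ⊩ ψ`, then `Γ ⊩ φ ⊸ ψ`. -/
theorem imll_limp_intro_valid (Γ : Multiset MForm) (φ ψ : MForm)
    (h : MValid (φ ::ₘ Γ) ψ) :
    MValid Γ (.limp φ ψ) := by
  intro B X hBX U hU Y hXY V hV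
  have hctx : MSuppCtx Y (V + U) (φ ::ₘ Γ) := .cons hV (hU.mono hXY)
  have := h Y Y (fun _ a => a) (V + U) hctx
  simpa [add_comm, add_left_comm] using this
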